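/- For a probability distribution on {0,1}^𝒳 and a subset S ⊆ 𝒳 and disjoint partition S' = S₁' ∪ S₂' of a set disjoint from S, the influence satisfies I(S→S') ≤ I(S→S₁') + I(S→S₂'). -/

import Mathlib

/-!
Pin `X_{S ∪ A} = c`. By the chain rule, the conditional law of `X_{S₁' ∪ S₂'}` is the law `μ_c`
of `X_{S₁'}` times the law `ν_{c,y₁}` of `X_{S₂'}` given in addition `X_{S₁'} = y₁`. The hybrid
bound `d_TV(μ ⊗ ν, μ' ⊗ ν') ≤ d_TV(μ, μ') + sup_{y₁} d_TV(ν_{y₁}, ν'_{y₁})` splits the distance: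
the first term is an instance of `I(S → S₁')`, the second one of `I(S → S₂')` with the larger
pinned set `A ∪ S₁'`, which is admissible because `S₁'` is disjoint from `S ∪ S₂'`.
-/

open Finset

noncomputable def tvFin {α : Type*} [Fintype α] (f g : α → ℝ) : ℝ :=
  (∑ y, |f y - g y|) / 2

def mergeConf {N : ℕ} (S : Finset (Fin N)) (a ω : Fin N → Bool) : Fin N → Bool :=
  fun j => if j ∈ S then a j else ω j

noncomputable def condLawSet {N : ℕ} (P : (Fin N → Bool) → ℝ) (T : Finset (Fin N))
    (c : Fin N → Bool) (S' : Finset (Fin N)) (y : {i // i ∈ S'} → Bool) : ℝ :=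
  (∑ σ ∈ Finset.univ.filter
      (fun σ : Fin N → Bool => (∀ j ∈ T, σ j = c j) ∧ ∀ i : {i // i ∈ S'}, σ i.val = y i), P σ) /
  (∑ σ ∈ Finset.univ.filter (fun σ : Fin N → Bool => ∀ j ∈ T, σ j = c j), P σ)

noncomputable def infl {N : ℕ} (P : (Fin N → Bool) → ℝ) (S S' : Finset (Fin N)) : ℝ :=
  ⨆ a : Fin N → Bool, ⨆ b : Fin N → Bool, ⨆ A : Finset (Fin N),
    ⨆ _ : A ⊆ ((Finset.univ \ S) \ S'), ⨆ ω : Fin N → Bool,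
      tvFin (condLawSet P (S ∪ A) (mergeConf S a ω) S')
            (condLawSet P (S ∪ A) (mergeConf S b ω) S')

open Function

section TotalVariation

variable {α β : Type*} [Fintype α] [Fintype β]

@[simp]
lemma tvFin_self (f : α → ℝ) : tvFin f f = 0 := by
  simp [tvFin]

lemma tvFin_comp_equiv (e : β ≃ α) (f g : α → ℝ) : tvFin (f ∘ e) (g ∘ e) = tvFin f g := by
  simp only [tvFin, comp_apply, e.sum_comp (fun x => |f x - g x|)]

/-- Hybrid argument: pass from `μ ⊗ ν` to `μ' ⊗ ν` and then to `μ' ⊗ ν'`. -/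
lemma tvFin_mul_le (μ μ' : α → ℝ) (ν ν' : α → β → ℝ) {K : ℝ}
    (hν : ∀ x y, 0 ≤ ν x y) (hν1 : ∀ x, ∑ y, ν x y ≤ 1)
    (hμ' : ∀ x, 0 ≤ μ' x) (hμ'1 : ∑ x, μ' x ≤ 1)
    (hK0 : 0 ≤ K) (hK : ∀ x, tvFin (ν x) (ν' x) ≤ K) :
    tvFin (fun p : α × β => μ p.1 * ν p.1 p.2) (fun p => μ' p.1 * ν' p.1 p.2)
      ≤ tvFin μ μ' + K := by
  have pointwise : ∀ x y, |μ x * ν x y - μ' x * ν' x y|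
      ≤ |μ x - μ' x| * ν x y + μ' x * |ν x y - ν' x y| := fun x y => by
    calc |μ x * ν x y - μ' x * ν' x y|
        = |(μ x - μ' x) * ν x y + μ' x * (ν x y - ν' x y)| := by congr 1; ring
      _ ≤ |μ x - μ' x| * ν x y + μ' x * |ν x y - ν' x y| := by
        refine (abs_add_le _ _).trans_eq ?_
        rw [abs_mul, abs_mul, abs_of_nonneg (hν x y), abs_of_nonneg (hμ' x)]
  have fiber : ∀ x, |μ x - μ' x| * ∑ y, ν x y + μ' x * ∑ y, |ν x y - ν' x y|
      ≤ |μ x - μ' x| + μ' x * (2 * K) := fun x => by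
    have hx : ∑ y, |ν x y - ν' x y| ≤ 2 * K := by
      have := hK x
      rw [tvFin] at this
      linarith
    gcongr
    · exact mul_le_of_le_one_right (abs_nonneg _) (hν1 x)
    · exact hμ' x
  have hmass : (∑ x, μ' x) * (2 * K) ≤ 2 * K := mul_le_of_le_one_left (by linarith) hμ'1
  simp only [tvFin, Fintype.sum_prod_type]
  calc (∑ x, ∑ y, |μ x * ν x y - μ' x * ν' x y|) / 2
      ≤ (∑ x, (|μ x - μ' x| * ∑ y, ν x y + μ' x * ∑ y, |ν x y - ν' x y|)) / 2 := by
        gcongr with x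
        rw [mul_sum, mul_sum, ← sum_add_distrib]
        exact sum_le_sum fun y _ => pointwise x y
    _ ≤ (∑ x, (|μ x - μ' x| + μ' x * (2 * K))) / 2 := by
        gcongr (∑ x ∈ _, ?_) / _ with x
        exact fiber x
    _ ≤ (∑ x, |μ x - μ' x|) / 2 + K := by
        rw [sum_add_distrib, ← sum_mul]
        linarith

end TotalVariation

section ConditionalLaw

variable {N : ℕ} (P : (Fin N → Bool) → ℝ)

noncomputable def cylinderMass (T : Finset (Fin N)) (c : Fin N → Bool) : ℝ :=
  ∑ σ ∈ univ.filter (fun σ : Fin N → Bool => ∀ j ∈ T, σ j = c j), P σ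

lemma cylinderMass_le_of_subset (hP0 : ∀ σ, 0 ≤ P σ) {T T' : Finset (Fin N)}
    {c c' : Fin N → Bool} (hT : T ⊆ T') (hc : ∀ j ∈ T, c' j = c j) :
    cylinderMass P T' c' ≤ cylinderMass P T c := by
  refine sum_le_sum_of_subset_of_nonneg (fun σ hσ => ?_) (fun σ _ _ => hP0 σ)
  simp only [mem_filter, mem_univ, true_and] at hσ ⊢
  exact fun j hj => (hσ j (hT hj)).trans (hc j hj)

lemma condLawSet_eq_cylinderMass_div {T S' : Finset (Fin N)} (hd : Disjoint S' T)
    (c : Fin N → Bool) (y : {i // i ∈ S'} → Bool) :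
    condLawSet P T c S' y = cylinderMass P (T ∪ S') (updateFinset c S' y) / cylinderMass P T c := by
  unfold condLawSet cylinderMass
  congr 1
  refine sum_congr (filter_congr fun σ _ => ?_) fun _ _ => rfl
  simp only [mem_union, or_imp, forall_and, updateFinset, Subtype.forall]
  refine and_congr (forall₂_congr fun j hj => ?_) (forall₂_congr fun j hj => ?_)
  · rw [dif_neg (disjoint_right.mp hd hj)]
  · rw [dif_pos hj]

lemma condLawSet_piFinsetUnion (hP0 : ∀ σ, 0 ≤ P σ) {T S₁ S₂ : Finset (Fin N)}
    (h12 : Disjoint S₁ S₂) (h1 : Disjoint S₁ T) (h2 : Disjoint S₂ T) (c : Fin N → Bool)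
    (y₁ : {i // i ∈ S₁} → Bool) (y₂ : {i // i ∈ S₂} → Bool) :
    condLawSet P T c (S₁ ∪ S₂) (Equiv.piFinsetUnion (fun _ => Bool) h12 (y₁, y₂)) =
      condLawSet P T c S₁ y₁ * condLawSet P (T ∪ S₁) (updateFinset c S₁ y₁) S₂ y₂ := by
  rw [condLawSet_eq_cylinderMass_div P (disjoint_union_left.mpr ⟨h1, h2⟩),
    condLawSet_eq_cylinderMass_div P h1,
    condLawSet_eq_cylinderMass_div P (disjoint_union_right.mpr ⟨h2, h12.symm⟩),
    ← updateFinset_updateFinset h12, ← union_assoc]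
  set m₁ := cylinderMass P (T ∪ S₁) (updateFinset c S₁ y₁)
  set m₁₂ := cylinderMass P (T ∪ S₁ ∪ S₂) (updateFinset (updateFinset c S₁ y₁) S₂ y₂)
  rcases eq_or_ne m₁ 0 with hm | hm
  -- `x / 0 = 0`: both sides vanish since the finer cylinder is null as well.
  · have : m₁₂ = 0 := by
      refine le_antisymm (hm ▸ cylinderMass_le_of_subset P hP0 subset_union_left fun j hj => ?_)
        (sum_nonneg fun σ _ => hP0 σ)
      rw [updateFinset, dif_neg (disjoint_right.mp (disjoint_union_right.mpr ⟨h2, h12.symm⟩) hj)]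
    simp [hm, this]
  · rw [div_mul_div_cancel₀' hm]

lemma condLawSet_nonneg (hP0 : ∀ σ, 0 ≤ P σ) (T : Finset (Fin N)) (c : Fin N → Bool)
    (S' : Finset (Fin N)) (y : {i // i ∈ S'} → Bool) : 0 ≤ condLawSet P T c S' y :=
  div_nonneg (sum_nonneg fun σ _ => hP0 σ) (sum_nonneg fun σ _ => hP0 σ)

lemma sum_condLawSet_le_one (T : Finset (Fin N)) (c : Fin N → Bool)
    (S' : Finset (Fin N)) : ∑ y, condLawSet P T c S' y ≤ 1 := by
  have fibers : ∑ y : {i // i ∈ S'} → Bool, ∑ σ ∈ univ.filter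
      (fun σ : Fin N → Bool => (∀ j ∈ T, σ j = c j) ∧ ∀ i : {i // i ∈ S'}, σ i.val = y i), P σ =
      cylinderMass P T c := by
    rw [cylinderMass, ← sum_fiberwise _ (fun σ (i : {i // i ∈ S'}) => σ i.val) P]
    refine sum_congr rfl fun y _ => sum_congr ?_ fun _ _ => rfl
    rw [filter_filter]
    exact filter_congr fun σ _ => by simp [funext_iff]
  simp only [condLawSet, ← sum_div]
  rw [fibers]
  exact div_self_le_one _

lemma tvFin_condLawSet_union_le (hP0 : ∀ σ, 0 ≤ P σ) {T S₁ S₂ : Finset (Fin N)}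
    (h12 : Disjoint S₁ S₂) (h1 : Disjoint S₁ T) (h2 : Disjoint S₂ T) (c c' : Fin N → Bool)
    {K : ℝ} (hK0 : 0 ≤ K) (hK : ∀ y₁, tvFin (condLawSet P (T ∪ S₁) (updateFinset c S₁ y₁) S₂)
      (condLawSet P (T ∪ S₁) (updateFinset c' S₁ y₁) S₂) ≤ K) :
    tvFin (condLawSet P T c (S₁ ∪ S₂)) (condLawSet P T c' (S₁ ∪ S₂)) ≤
      tvFin (condLawSet P T c S₁) (condLawSet P T c' S₁) + K := by
  rw [← tvFin_comp_equiv (Equiv.piFinsetUnion (fun _ => Bool) h12)]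
  have factor (c : Fin N → Bool) :
      condLawSet P T c (S₁ ∪ S₂) ∘ Equiv.piFinsetUnion (fun _ => Bool) h12 = fun p =>
        condLawSet P T c S₁ p.1 * condLawSet P (T ∪ S₁) (updateFinset c S₁ p.1) S₂ p.2 :=
    funext fun p => condLawSet_piFinsetUnion P hP0 h12 h1 h2 c p.1 p.2
  rw [factor, factor]
  exact tvFin_mul_le (condLawSet P T c S₁) (condLawSet P T c' S₁)
    (fun y₁ => condLawSet P (T ∪ S₁) (updateFinset c S₁ y₁) S₂)
    (fun y₁ => condLawSet P (T ∪ S₁) (updateFinset c' S₁ y₁) S₂)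
    (fun _ _ => condLawSet_nonneg P hP0 _ _ _ _)
    (fun _ => sum_condLawSet_le_one P _ _ _) (condLawSet_nonneg P hP0 _ _ _)
    (sum_condLawSet_le_one P _ _ _) hK0 hK

end ConditionalLaw

section Influence

variable {N : ℕ} (P : (Fin N → Bool) → ℝ)

lemma le_infl (S S' : Finset (Fin N)) (a b : Fin N → Bool) {A : Finset (Fin N)}
    (hA : A ⊆ (univ \ S) \ S') (ω : Fin N → Bool) :
    tvFin (condLawSet P (S ∪ A) (mergeConf S a ω) S') (condLawSet P (S ∪ A) (mergeConf S b ω) S')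
      ≤ infl P S S' := by
  unfold infl
  apply le_ciSup_of_le (Finite.bddAbove_range (α := ℝ) _) a
  apply le_ciSup_of_le (Finite.bddAbove_range (α := ℝ) _) b
  apply le_ciSup_of_le (Finite.bddAbove_range (α := ℝ) _) A
  apply le_ciSup_of_le (Finite.bddAbove_range (α := ℝ) _) hA
  exact le_ciSup_of_le (Finite.bddAbove_range (α := ℝ) _) ω le_rfl

lemma infl_nonneg (S S' : Finset (Fin N)) : 0 ≤ infl P S S' := by
  simpa using le_infl P S S' 0 0 (empty_subset _) 0

lemma infl_le {S S' : Finset (Fin N)} {K : ℝ} (hK0 : 0 ≤ K)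
    (h : ∀ a b A, A ⊆ (univ \ S) \ S' → ∀ ω, tvFin (condLawSet P (S ∪ A) (mergeConf S a ω) S')
      (condLawSet P (S ∪ A) (mergeConf S b ω) S') ≤ K) :
    infl P S S' ≤ K :=
  Real.iSup_le (fun a => Real.iSup_le (fun b => Real.iSup_le (fun A => Real.iSup_le
    (fun hA => Real.iSup_le (h a b A hA) hK0) hK0) hK0) hK0) hK0

end Influence

lemma updateFinset_mergeConf {N : ℕ} {S S' : Finset (Fin N)} (h : Disjoint S S')
    (a ω : Fin N → Bool) (y : {i // i ∈ S'} → Bool) :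
    updateFinset (mergeConf S a ω) S' y = mergeConf S a (updateFinset ω S' y) := by
  funext j
  by_cases hj : j ∈ S
  · simp [updateFinset, mergeConf, hj, disjoint_left.mp h hj]
  · simp [updateFinset, mergeConf, hj]

theorem stmt8_general {N : ℕ} (P : (Fin N → Bool) → ℝ)
    (hP0 : ∀ σ, 0 ≤ P σ)
    (S S₁' S₂' : Finset (Fin N))
    (h12 : Disjoint S₁' S₂') (hS : Disjoint S (S₁' ∪ S₂')) :
    infl P S (S₁' ∪ S₂') ≤ infl P S S₁' + infl P S S₂' := by
  have hS₁ : Disjoint S S₁' := (disjoint_union_right.mp hS).1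
  refine infl_le P (add_nonneg (infl_nonneg P S S₁') (infl_nonneg P S S₂')) fun a b A hA ω => ?_
  simp only [subset_sdiff, disjoint_union_right, subset_univ, true_and] at hA
  obtain ⟨hAS, hA₁, hA₂⟩ := hA
  have hT₁ : Disjoint S₁' (S ∪ A) := disjoint_union_right.mpr ⟨hS₁.symm, hA₁.symm⟩
  have hT₂ : Disjoint S₂' (S ∪ A) :=
    disjoint_union_right.mpr ⟨(disjoint_union_right.mp hS).2.symm, hA₂.symm⟩
  have hA₁₂ : A ∪ S₁' ⊆ (univ \ S) \ S₂' := by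
    simp only [subset_sdiff, disjoint_union_left, subset_univ, true_and]
    exact ⟨⟨hAS, hS₁.symm⟩, hA₂, h12⟩
  have hA₁' : A ⊆ (univ \ S) \ S₁' := by
    simp only [subset_sdiff, subset_univ, true_and]
    exact ⟨hAS, hA₁⟩
  refine (tvFin_condLawSet_union_le P hP0 h12 hT₁ hT₂ _ _ (infl_nonneg P S S₂') fun y₁ => ?_).trans
    (add_le_add_left (le_infl P S S₁' a b hA₁' ω) _)
  rw [updateFinset_mergeConf hS₁, updateFinset_mergeConf hS₁, union_assoc]
  exact le_infl P S S₂' a b hA₁₂ _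

/-- Subadditivity of influence in the target set: `I(S → S₁'∪S₂') ≤ I(S→S₁') + I(S→S₂')`. -/
theorem stmt8 {N : ℕ} (P : (Fin N → Bool) → ℝ)
    (hP0 : ∀ σ, 0 ≤ P σ) (hP1 : ∑ σ, P σ = 1)
    (S S₁' S₂' : Finset (Fin N))
    (h12 : Disjoint S₁' S₂') (hS : Disjoint S (S₁' ∪ S₂')) :
    infl P S (S₁' ∪ S₂') ≤ infl P S S₁' + infl P S S₂' :=
  stmt8_general P hP0 S S₁' S₂' h12 hS
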